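/- arXiv:math/0211221 — 3 statements merged into one kernel-verified Lean document; each statement's English description precedes it below -/
import Mathlib

section
/- Let H be a complex Hilbert space and let φ : 𝒟(H) → 𝒟(H) be a bijective map which preserves the trace-norm distance and satisfies φ(0) = 0. Then φ preserves orthogonality in both directions: for all X, Y ∈ 𝒟(H), XY = 0 if and only if φ(X)φ(Y) = 0. -/
/-!
Common framework: operators on a complex Hilbert space `H`, the trace (computed in a
fixed orthonormal basis, which is basis-independent for positive operators), the set
`𝒟(H)` of density operators (positive trace-class operators), the set `S(H)` of states
(density operators of trace one), the trace norm `‖·‖₁`, the fidelity and the Bures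
metric.
-/

set_option synthInstance.maxHeartbeats 1000000
set_option maxHeartbeats 1000000

open scoped InnerProductSpace

noncomputable section

variable (H : Type*) [NormedAddCommGroup H] [InnerProductSpace ℂ H] [CompleteSpace H]

/-- The vectors of a fixed Hilbert (orthonormal) basis of `H`. -/
def hilbertBasisVectors : Set H := (exists_hilbertBasis ℂ H).choose

variable {H}

/-- The trace of an operator, computed as the sum of its diagonal entries in the fixed
orthonormal basis.  For positive trace-class operators this is the usual trace (which is
independent of the chosen basis). -/
def opTrace (T : H →L[ℂ] H) : ℝ :=
  ∑' e : hilbertBasisVectors H, (inner ℂ (e : H) (T e) : ℂ).re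

/-- `T` has a summable diagonal in the fixed orthonormal basis.  For positive operators
this says exactly that `T` is trace class. -/
def TraceSummable (T : H →L[ℂ] H) : Prop :=
  Summable fun e : hilbertBasisVectors H => (inner ℂ (e : H) (T e) : ℂ).re

variable (H)

/-- `𝒟(H)`: the set of density operators, i.e. positive trace-class operators on `H`. -/
def densityOps : Set (H →L[ℂ] H) := {T | T.IsPositive ∧ TraceSummable T}

/-- `S(H)`: the set of states, i.e. positive trace-class operators of trace one. -/
def states : Set (H →L[ℂ] H) := {T | T ∈ densityOps H ∧ opTrace T = 1}

variable {H}

/-- The square root of a (positive) operator, via the continuous functional calculus. -/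
def opSqrt (T : H →L[ℂ] H) : H →L[ℂ] H := CFC.sqrt T

/-- The absolute value `|T| = (T*T)^{1/2}` of an operator. -/
def opAbs (T : H →L[ℂ] H) : H →L[ℂ] H := CFC.sqrt (star T * T)

/-- The trace norm `‖T‖₁ = tr |T|`. -/
def traceNorm (T : H →L[ℂ] H) : ℝ := opTrace (opAbs T)

/-- The fidelity `F(A,B) = tr ((A^{1/2} B A^{1/2})^{1/2})`. -/
def fidelity (A B : H →L[ℂ] H) : ℝ := opTrace (opSqrt (opSqrt A * B * opSqrt A))

/-- The Bures distance `d_b(A,B) = (tr A + tr B - 2 F(A,B))^{1/2}`. -/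
def buresDist (A B : H →L[ℂ] H) : ℝ := Real.sqrt (opTrace A + opTrace B - 2 * fidelity A B)

/-- The closed ball `B^b_ε(A)` of radius `ε` around `A` in `𝒟(H)` for the Bures metric. -/
def buresBall (A : H →L[ℂ] H) (ε : ℝ) : Set (H →L[ℂ] H) :=
  {X ∈ densityOps H | buresDist X A ≤ ε}

/-- The diameter of the Bures ball `B^b_ε(A)`: the supremum of the Bures distances
between its elements. -/
def buresBallDiam (A : H →L[ℂ] H) (ε : ℝ) : ℝ :=
  sSup {r : ℝ | ∃ X ∈ buresBall A ε, ∃ Y ∈ buresBall A ε, r = buresDist X Y}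

/-- The closed ball `B¹_ε(A)` of radius `ε` around `A` in `𝒟(H)` for the trace-norm
metric. -/
def traceNormBall (A : H →L[ℂ] H) (ε : ℝ) : Set (H →L[ℂ] H) :=
  {X ∈ densityOps H | traceNorm (X - A) ≤ ε}

/-- `P` is a rank-one (orthogonal) projection. -/
def IsRankOneProjection (P : H →L[ℂ] H) : Prop :=
  IsSelfAdjoint P ∧ P * P = P ∧ Module.finrank ℂ (LinearMap.range (P : H →ₗ[ℂ] H)) = 1

/-- The orthocomplement of a subset of `𝒟(H)` with respect to the orthogonality
relation `X ⊥ Y ↔ XY = 0`. -/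
def densPerp (M : Set (H →L[ℂ] H)) : Set (H →L[ℂ] H) :=
  {X ∈ densityOps H | ∀ Y ∈ M, X * Y = 0}

end

/-!
Orthogonality in `𝒟(H)` is metric: for `X, Y ∈ 𝒟(H)`, `XY = 0` iff
`‖X - Y‖₁ = ‖X‖₁ + ‖Y‖₁`. A `d₁`-isometry fixing `0` preserves `‖·‖₁ = d₁(·, 0)`, hence this
relation.

If `XY = 0` then `X` and `Y` are the positive and negative parts of `X - Y`. Conversely, let `P`
project onto `(ker (X - Y)⁺)ᗮ`. Then `P (X - Y) P = (X - Y)⁺`, so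
`tr (X - Y)⁺ + tr PYP + tr (1 - P)X(1 - P) = tr X`, and symmetrically for `(X - Y)⁻` and `tr Y`.
Equality in the trace-norm identity forces `tr PYP = 0 = tr (1 - P)X(1 - P)`, i.e.
`YP = 0 = X(1 - P)`, so `XY = XPY = 0`. Traces are taken in `ℝ≥0∞`, where they are additive on
positive operators without summability side conditions.
-/

open scoped ENNReal

noncomputable section

variable {H : Type*} [NormedAddCommGroup H] [InnerProductSpace ℂ H] [CompleteSpace H]

variable (H) in
def hilbertBasis : HilbertBasis (hilbertBasisVectors H) ℂ H :=
  (exists_hilbertBasis ℂ H).choose_spec.choose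

@[simp]
lemma hilbertBasis_apply (e : hilbertBasisVectors H) : hilbertBasis H e = e :=
  congrFun (exists_hilbertBasis ℂ H).choose_spec.choose_spec e

lemma enorm_sq_eq_ofReal {E : Type*} [NormedAddCommGroup E] (x : E) :
    ‖x‖ₑ ^ 2 = ENNReal.ofReal (‖x‖ ^ 2) := by
  rw [ENNReal.ofReal_pow (norm_nonneg _), ofReal_norm]

lemma HilbertBasis.tsum_enorm_inner_sq {ι 𝕜 E : Type*} [RCLike 𝕜] [NormedAddCommGroup E]
    [InnerProductSpace 𝕜 E] (b : HilbertBasis ι 𝕜 E) (x : E) :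
    ∑' i, ‖⟪b i, x⟫_𝕜‖ₑ ^ 2 = ‖x‖ₑ ^ 2 := by
  have hparseval : HasSum (fun i => ‖⟪b i, x⟫_𝕜‖ ^ 2) (‖x‖ ^ 2) := by
    have hterm : ∀ i, ⟪x, b i⟫_𝕜 * ⟪b i, x⟫_𝕜 = ((‖⟪b i, x⟫_𝕜‖ ^ 2 : ℝ) : 𝕜) := fun i => by
      rw [← inner_conj_symm x, RCLike.conj_mul, RCLike.ofReal_pow]
    have h := b.hasSum_inner_mul_inner x x
    simp only [hterm, inner_self_eq_norm_sq_to_K, ← RCLike.ofReal_pow] at h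
    exact (RCLike.hasSum_ofReal 𝕜).mp h
  simp only [enorm_sq_eq_ofReal]
  rw [← ENNReal.ofReal_tsum_of_nonneg (fun _ => sq_nonneg _) hparseval.summable,
    hparseval.tsum_eq]

def hsNormSq (A : H →L[ℂ] H) : ℝ≥0∞ :=
  ∑' e : hilbertBasisVectors H, ‖A e‖ₑ ^ 2

lemma hsNormSq_eq_tsum_tsum (A : H →L[ℂ] H) :
    hsNormSq A = ∑' (f : hilbertBasisVectors H) (e : hilbertBasisVectors H),
      ‖⟪(f : H), A e⟫_ℂ‖ₑ ^ 2 := by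
  rw [ENNReal.tsum_comm]
  exact tsum_congr fun e => by simpa using ((hilbertBasis H).tsum_enorm_inner_sq (A e)).symm

lemma hsNormSq_star (A : H →L[ℂ] H) : hsNormSq (star A) = hsNormSq A := by
  rw [hsNormSq_eq_tsum_tsum, hsNormSq_eq_tsum_tsum A, ENNReal.tsum_comm]
  refine tsum_congr fun f => tsum_congr fun e => ?_
  rw [ContinuousLinearMap.star_eq_adjoint, ContinuousLinearMap.adjoint_inner_right,
    ← inner_conj_symm, RCLike.enorm_conj]

lemma eq_zero_of_hsNormSq_eq_zero {A : H →L[ℂ] H} (h : hsNormSq A = 0) : A = 0 := by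
  refine ContinuousLinearMap.ext_on
    (Submodule.dense_iff_topologicalClosure_eq_top.mpr (hilbertBasis H).dense_span) ?_
  rintro _ ⟨e, rfl⟩
  simpa using ENNReal.tsum_eq_zero.mp h e

lemma hsNormSq_mul_add_one_sub_mul {P : H →L[ℂ] H} (hP : IsStarProjection P) (S : H →L[ℂ] H) :
    hsNormSq (P * S) + hsNormSq ((1 - P) * S) = hsNormSq S := by
  rw [hsNormSq, hsNormSq, ← ENNReal.tsum_add]
  refine tsum_congr fun e => ?_
  set u := S e
  have horth : ⟪P u, (1 - P) u⟫_ℂ = 0 := by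
    rw [← ContinuousLinearMap.adjoint_inner_right, ← ContinuousLinearMap.star_eq_adjoint,
      hP.isSelfAdjoint.star_eq, ← mul_apply_eq_comp, hP.mul_one_sub_self, zero_apply,
      inner_zero_right]
  have hpyth := norm_add_sq_eq_norm_sq_add_norm_sq_of_inner_eq_zero _ _ horth
  rw [← add_apply, add_sub_cancel, one_apply_eq_self, ← sq, ← sq, ← sq] at hpyth
  simp only [mul_apply_eq_comp, enorm_sq_eq_ofReal]
  rw [← ENNReal.ofReal_add (sq_nonneg _) (sq_nonneg _), ← hpyth]

def eTrace (M : H →L[ℂ] H) : ℝ≥0∞ :=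
  ∑' e : hilbertBasisVectors H, ENNReal.ofReal (⟪(e : H), M e⟫_ℂ).re

lemma re_inner_apply_self_eq_norm_sqrt_sq {M : H →L[ℂ] H} (hM : 0 ≤ M) (x : H) :
    (⟪x, M x⟫_ℂ).re = ‖CFC.sqrt M x‖ ^ 2 := by
  have hsqrt : IsSelfAdjoint (CFC.sqrt M) := (CFC.sqrt_nonneg M).isSelfAdjoint
  conv_lhs => rw [← CFC.sqrt_mul_sqrt_self M hM, mul_apply_eq_comp,
    ← ContinuousLinearMap.adjoint_inner_left, ← ContinuousLinearMap.star_eq_adjoint,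
    hsqrt.star_eq, inner_self_eq_norm_sq_to_K]
  norm_cast

lemma eTrace_star_mul_mul {M : H →L[ℂ] H} (hM : 0 ≤ M) (C : H →L[ℂ] H) :
    eTrace (star C * M * C) = hsNormSq (CFC.sqrt M * C) := by
  refine tsum_congr fun e => ?_
  rw [mul_apply_eq_comp, mul_apply_eq_comp, ContinuousLinearMap.star_eq_adjoint,
    ContinuousLinearMap.adjoint_inner_right, re_inner_apply_self_eq_norm_sqrt_sq hM,
    enorm_sq_eq_ofReal, mul_apply_eq_comp]

lemma eTrace_conj {M C : H →L[ℂ] H} (hM : 0 ≤ M) (hC : IsSelfAdjoint C) :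
    eTrace (C * M * C) = hsNormSq (C * CFC.sqrt M) := by
  have hsqrt : IsSelfAdjoint (CFC.sqrt M) := (CFC.sqrt_nonneg M).isSelfAdjoint
  have h := eTrace_star_mul_mul hM C
  rw [hC.star_eq] at h
  rw [h, ← hsNormSq_star, star_mul, hsqrt.star_eq, hC.star_eq]

lemma eTrace_add {M N : H →L[ℂ] H} (hM : 0 ≤ M) (hN : 0 ≤ N) :
    eTrace (M + N) = eTrace M + eTrace N := by
  rw [eTrace, eTrace, eTrace, ← ENNReal.tsum_add]
  refine tsum_congr fun e => ?_
  rw [add_apply, inner_add_right, Complex.add_re]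
  exact ENNReal.ofReal_add ((M.nonneg_iff_isPositive.mp hM).re_inner_nonneg_right _)
    ((N.nonneg_iff_isPositive.mp hN).re_inner_nonneg_right _)

lemma opTrace_eq_toReal_eTrace {M : H →L[ℂ] H} (hM : 0 ≤ M) :
    opTrace M = (eTrace M).toReal := by
  rw [eTrace, ENNReal.tsum_toReal_eq fun _ => ENNReal.ofReal_ne_top]
  exact tsum_congr fun e =>
    (ENNReal.toReal_ofReal ((M.nonneg_iff_isPositive.mp hM).re_inner_nonneg_right _)).symm

lemma eTrace_ne_top {M : H →L[ℂ] H} (hM : M ∈ densityOps H) : eTrace M ≠ ⊤ :=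
  ne_of_eq_of_ne
    (ENNReal.ofReal_tsum_of_nonneg (fun _ => hM.1.re_inner_nonneg_right _) hM.2).symm
    ENNReal.ofReal_ne_top

lemma eTrace_conj_add_eTrace_conj_one_sub {M P : H →L[ℂ] H} (hM : 0 ≤ M)
    (hP : IsStarProjection P) :
    eTrace (P * M * P) + eTrace ((1 - P) * M * (1 - P)) = eTrace M := by
  rw [eTrace_conj hM hP.isSelfAdjoint, eTrace_conj hM hP.one_sub.isSelfAdjoint,
    hsNormSq_mul_add_one_sub_mul hP]
  simpa using (eTrace_conj hM (IsSelfAdjoint.one (H →L[ℂ] H))).symm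

lemma mul_eq_zero_of_eTrace_conj_eq_zero {M C : H →L[ℂ] H} (hM : 0 ≤ M)
    (hC : IsSelfAdjoint C) (h : eTrace (C * M * C) = 0) : M * C = 0 := by
  have hsqrt : hsNormSq (CFC.sqrt M * C) = 0 := by rw [← eTrace_star_mul_mul hM, hC.star_eq, h]
  rw [← CFC.sqrt_mul_sqrt_self M hM, mul_assoc, eq_zero_of_hsNormSq_eq_zero hsqrt, mul_zero]

lemma zero_mem_densityOps : (0 : H →L[ℂ] H) ∈ densityOps H :=
  ⟨ContinuousLinearMap.isPositive_zero, by simp [TraceSummable]⟩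

lemma traceNorm_eq_toReal_eTrace {T : H →L[ℂ] H} (hT : IsSelfAdjoint T) :
    traceNorm T = (eTrace T⁺ + eTrace T⁻).toReal := by
  change opTrace (CFC.abs T) = _
  rw [← CFC.posPart_add_negPart T hT,
    opTrace_eq_toReal_eTrace (add_nonneg (CFC.posPart_nonneg T) (CFC.negPart_nonneg T)),
    eTrace_add (CFC.posPart_nonneg T) (CFC.negPart_nonneg T)]

lemma traceNorm_of_nonneg {X : H →L[ℂ] H} (hX : 0 ≤ X) : traceNorm X = (eTrace X).toReal := by
  change opTrace (CFC.abs X) = _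
  rw [CFC.abs_of_nonneg X hX, opTrace_eq_toReal_eTrace hX]

lemma traceNorm_sub_of_mul_eq_zero {X Y : H →L[ℂ] H} (hX : X ∈ densityOps H)
    (hY : Y ∈ densityOps H) (hXY : X * Y = 0) :
    traceNorm (X - Y) = traceNorm X + traceNorm Y := by
  have hX0 : 0 ≤ X := X.nonneg_iff_isPositive.mpr hX.1
  have hY0 : 0 ≤ Y := Y.nonneg_iff_isPositive.mpr hY.1
  obtain ⟨hpos, hneg⟩ := CFC.posPart_negPart_unique rfl hXY hX0 hY0
  rw [traceNorm_eq_toReal_eTrace (hX0.isSelfAdjoint.sub hY0.isSelfAdjoint), hpos, hneg,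
    ENNReal.toReal_add (eTrace_ne_top hX) (eTrace_ne_top hY), traceNorm_of_nonneg hX0,
    traceNorm_of_nonneg hY0]

lemma exists_isStarProjection_conj_eq_posPart {T : H →L[ℂ] H} (hT : IsSelfAdjoint T) :
    ∃ P : H →L[ℂ] H, IsStarProjection P ∧ P * T * P = T⁺ := by
  set K := (T⁺).ker
  set Q := K.starProjection
  have hQ : IsSelfAdjoint Q := isSelfAdjoint_starProjection K
  have hTpos : IsSelfAdjoint T⁺ := (CFC.posPart_nonneg T).isSelfAdjoint
  have hTneg : IsSelfAdjoint T⁻ := (CFC.negPart_nonneg T).isSelfAdjoint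
  have hposQ : T⁺ * Q = 0 := by
    ext x
    exact K.starProjection_apply_mem x
  have hQneg : Q * T⁻ = T⁻ := by
    ext x
    refine Submodule.starProjection_eq_self_iff.mpr ?_
    change T⁺ (T⁻ x) = 0
    rw [← mul_apply_eq_comp, CFC.posPart_mul_negPart, zero_apply]
  have hQpos : Q * T⁺ = 0 := by
    simpa [hQ.star_eq, hTpos.star_eq] using congrArg star hposQ
  have hnegQ : T⁻ * Q = T⁻ := by
    simpa [hQ.star_eq, hTneg.star_eq] using congrArg star hQneg
  refine ⟨1 - Q, isStarProjection_starProjection.one_sub, ?_⟩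
  calc (1 - Q) * T * (1 - Q)
      = T⁺ - Q * T⁺ - T⁺ * Q + Q * T⁺ * Q - (T⁻ - Q * T⁻ - T⁻ * Q + Q * T⁻ * Q) := by
        conv_lhs => rw [← CFC.posPart_sub_negPart T hT]
        noncomm_ring
    _ = T⁺ := by
        rw [hposQ, mul_assoc Q T⁻, hnegQ, hQpos, hQneg]
        noncomm_ring

lemma exists_isStarProjection_eTrace_posPart_add {X Y : H →L[ℂ] H} (hX : 0 ≤ X) (hY : 0 ≤ Y) :
    ∃ P : H →L[ℂ] H, IsStarProjection P ∧
      eTrace (X - Y)⁺ + (eTrace (P * Y * P) + eTrace ((1 - P) * X * (1 - P))) = eTrace X := by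
  obtain ⟨P, hP, hPT⟩ :=
    exists_isStarProjection_conj_eq_posPart (hX.isSelfAdjoint.sub hY.isSelfAdjoint)
  refine ⟨P, hP, ?_⟩
  have hsplit : (X - Y)⁺ + P * Y * P = P * X * P := by
    rw [← hPT]
    noncomm_ring
  rw [← add_assoc, ← eTrace_add (CFC.posPart_nonneg _) (hP.isSelfAdjoint.conjugate_nonneg hY),
    hsplit, eTrace_conj_add_eTrace_conj_one_sub hX hP]

lemma mul_eq_zero_of_traceNorm_sub_eq_add {X Y : H →L[ℂ] H} (hX : X ∈ densityOps H)
    (hY : Y ∈ densityOps H) (h : traceNorm (X - Y) = traceNorm X + traceNorm Y) :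
    X * Y = 0 := by
  have hX0 : 0 ≤ X := X.nonneg_iff_isPositive.mpr hX.1
  have hY0 : 0 ≤ Y := Y.nonneg_iff_isPositive.mpr hY.1
  obtain ⟨P, hP, hXsplit⟩ := exists_isStarProjection_eTrace_posPart_add hX0 hY0
  obtain ⟨Q, -, hYsplit⟩ := exists_isStarProjection_eTrace_posPart_add hY0 hX0
  rw [← neg_sub, CFC.posPart_neg] at hYsplit
  have hfin : eTrace (X - Y)⁺ + eTrace (X - Y)⁻ ≠ ⊤ := ENNReal.add_ne_top.mpr
    ⟨ne_top_of_le_ne_top (eTrace_ne_top hX) (hXsplit ▸ le_self_add),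
      ne_top_of_le_ne_top (eTrace_ne_top hY) (hYsplit ▸ le_self_add)⟩
  have htraces : eTrace (X - Y)⁺ + eTrace (X - Y)⁻ = eTrace X + eTrace Y := by
    rw [traceNorm_eq_toReal_eTrace (hX0.isSelfAdjoint.sub hY0.isSelfAdjoint),
      traceNorm_of_nonneg hX0, traceNorm_of_nonneg hY0,
      ← ENNReal.toReal_add (eTrace_ne_top hX) (eTrace_ne_top hY)] at h
    exact (ENNReal.toReal_eq_toReal_iff' hfin
      (ENNReal.add_ne_top.mpr ⟨eTrace_ne_top hX, eTrace_ne_top hY⟩)).mp h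
  set r := eTrace (P * Y * P) + eTrace ((1 - P) * X * (1 - P))
  have hrest : r = 0 := by
    have hle : eTrace (X - Y)⁺ + eTrace (X - Y)⁻ + r ≤ eTrace (X - Y)⁺ + eTrace (X - Y)⁻ + 0 :=
      calc eTrace (X - Y)⁺ + eTrace (X - Y)⁻ + r = eTrace (X - Y)⁺ + r + eTrace (X - Y)⁻ :=
            add_right_comm _ _ _
        _ ≤ eTrace X + eTrace Y := add_le_add hXsplit.le (hYsplit ▸ le_self_add)
        _ = eTrace (X - Y)⁺ + eTrace (X - Y)⁻ + 0 := by rw [add_zero, htraces]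
    exact nonpos_iff_eq_zero.mp ((ENNReal.add_le_add_iff_left hfin).mp hle)
  obtain ⟨hPYP, hX1P⟩ := add_eq_zero.mp hrest
  have hYP := mul_eq_zero_of_eTrace_conj_eq_zero hY0 hP.isSelfAdjoint hPYP
  have hPY : P * Y = 0 := by
    simpa [hP.isSelfAdjoint.star_eq, hY0.isSelfAdjoint.star_eq] using congrArg star hYP
  calc X * Y = X * (1 - P) * Y + X * (P * Y) := by noncomm_ring
    _ = 0 := by
      rw [mul_eq_zero_of_eTrace_conj_eq_zero hX0 hP.one_sub.isSelfAdjoint hX1P, hPY]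
      noncomm_ring

lemma traceNorm_sub_eq_add_iff_mul_eq_zero {X Y : H →L[ℂ] H} (hX : X ∈ densityOps H)
    (hY : Y ∈ densityOps H) :
    traceNorm (X - Y) = traceNorm X + traceNorm Y ↔ X * Y = 0 :=
  ⟨mul_eq_zero_of_traceNorm_sub_eq_add hX hY, traceNorm_sub_of_mul_eq_zero hX hY⟩

end

/-- A bijective trace-norm isometry of `𝒟(H)` fixing `0` preserves orthogonality in
both directions. -/
theorem traceNorm_isometry_preserves_orthogonality
    {H : Type*} [NormedAddCommGroup H] [InnerProductSpace ℂ H] [CompleteSpace H]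
    (φ : (H →L[ℂ] H) → (H →L[ℂ] H))
    (hbij : Set.BijOn φ (densityOps H) (densityOps H))
    (hiso : ∀ A ∈ densityOps H, ∀ B ∈ densityOps H,
      traceNorm (φ A - φ B) = traceNorm (A - B))
    (h0 : φ 0 = 0) :
    ∀ X ∈ densityOps H, ∀ Y ∈ densityOps H, (X * Y = 0 ↔ φ X * φ Y = 0) := by
  have hnorm : ∀ Z ∈ densityOps H, traceNorm (φ Z) = traceNorm Z := fun Z hZ => by
    simpa [h0] using hiso Z hZ 0 zero_mem_densityOps
  intro X hX Y hY
  rw [← traceNorm_sub_eq_add_iff_mul_eq_zero hX hY,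
    ← traceNorm_sub_eq_add_iff_mul_eq_zero (hbij.mapsTo hX) (hbij.mapsTo hY),
    hiso X hX Y hY, hnorm X hX, hnorm Y hY]
end

section
/- Let H be a complex Hilbert space, let A ∈ 𝒟(H), and let n be a positive integer. Then A has rank n if and only if the double orthocomplement {A}^⊥⊥ (taken inside 𝒟(H) with respect to the orthogonality relation XY = 0) contains n pairwise orthogonal nonzero elements but does not contain n+1 pairwise orthogonal nonzero elements. -/
/-!
Common framework: operators on a complex Hilbert space `H`, the trace (computed in a
fixed orthonormal basis, which is basis-independent for positive operators), the set
`𝒟(H)` of density operators (positive trace-class operators), the set `S(H)` of states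
(density operators of trace one), the trace norm `‖·‖₁`, the fidelity and the Bures
metric.
-/

set_option synthInstance.maxHeartbeats 1000000
set_option maxHeartbeats 1000000

open scoped InnerProductSpace

/-!
Write `W = (ran A)ᗮᗮ` for the closure of the range of `A`. Every `X ∈ {A}^⊥⊥` maps into `W`,
because the projection onto any `w ⊥ ran A` lies in `{A}^⊥`; conversely every projection onto a
line of `W` lies in `{A}^⊥⊥`. Picking a nonzero vector in the range of each member of an
orthogonal family in `{A}^⊥⊥` gives orthogonal nonzero vectors of `W`, and Gram–Schmidt turns
`k` independent vectors of `W` into `k` orthogonal rank-one projections. So the largest orthogonal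
families in `{A}^⊥⊥` have exactly `dim W` members, and `dim W = rank A` whenever either is finite
and nonzero, a finite-dimensional range being closed.
-/

open InnerProductSpace

def HasOrthogonalFamily {R : Type*} [Mul R] [Zero R] (M : Set R) (k : ℕ) : Prop :=
  ∃ f : Fin k → R, (∀ i, f i ∈ M) ∧ (∀ i, f i ≠ 0) ∧ (∀ i j, i ≠ j → f i * f j = 0)

theorem Submodule.finrank_eq_iff_rank_orthogonal_orthogonal_eq {𝕜 E : Type*} [RCLike 𝕜]
    [NormedAddCommGroup E] [InnerProductSpace 𝕜 E] (K : Submodule 𝕜 E) {n : ℕ} (hn : n ≠ 0) :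
    Module.finrank 𝕜 K = n ↔ Module.rank 𝕜 Kᗮᗮ = n := by
  constructor
  · intro hK
    have : FiniteDimensional 𝕜 K := Module.finite_of_finrank_pos (by omega)
    rw [K.orthogonal_orthogonal, ← hK, Module.finrank_eq_rank]
  · intro hK
    have : FiniteDimensional 𝕜 Kᗮᗮ :=
      Module.rank_lt_aleph0_iff.mp (hK ▸ Cardinal.natCast_lt_aleph0)
    have : FiniteDimensional 𝕜 K := Submodule.finiteDimensional_of_le K.le_orthogonal_orthogonal
    rw [K.orthogonal_orthogonal] at hK
    exact Module.finrank_eq_of_rank_eq hK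

section DensityOperators

variable {H : Type*} [NormedAddCommGroup H] [InnerProductSpace ℂ H] [CompleteSpace H]

theorem rankOne_self_mem_densityOps (x : H) : rankOne ℂ x x ∈ densityOps H := by
  refine ⟨isPositive_rankOne_self x, ?_⟩
  obtain ⟨b, hb⟩ := (exists_hilbertBasis ℂ H).choose_spec
  have hbasis : Orthonormal ℂ ((↑) : hilbertBasisVectors H → H) := hb ▸ b.orthonormal
  refine hbasis.inner_products_summable (x := x) |>.congr fun e => ?_
  rw [inner_right_rankOne_apply, ← RCLike.re_eq_complex_re, inner_mul_symm_re_eq_norm, norm_mul,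
    norm_inner_symm, sq]

variable {A : H →L[ℂ] H}

theorem rankOne_self_mem_densPerp_singleton {w : H}
    (hw : w ∈ (LinearMap.range (A : H →ₗ[ℂ] H))ᗮ) :
    rankOne ℂ w w ∈ densPerp {A} := by
  refine ⟨rankOne_self_mem_densityOps w, ?_⟩
  simp only [Set.mem_singleton_iff, forall_eq]
  ext z
  have hwAz : ⟪w, A z⟫_ℂ = 0 :=
    Submodule.inner_left_of_mem_orthogonal (LinearMap.mem_range_self (A : H →ₗ[ℂ] H) z) hw
  simp [hwAz]

theorem apply_eq_zero_of_mem_densPerp_singleton {Y : H →L[ℂ] H} (hY : Y ∈ densPerp {A})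
    {x : H} (hx : x ∈ (LinearMap.range (A : H →ₗ[ℂ] H))ᗮᗮ) : Y x = 0 := by
  rw [Submodule.orthogonal_orthogonal_eq_closure] at hx
  refine Submodule.topologicalClosure_minimal _ ?_ Y.isClosed_ker hx
  rintro _ ⟨z, rfl⟩
  simpa using congr($(hY.2 A rfl) z)

theorem rankOne_self_mem_densPerp_densPerp {x : H}
    (hx : x ∈ (LinearMap.range (A : H →ₗ[ℂ] H))ᗮᗮ) :
    rankOne ℂ x x ∈ densPerp (densPerp {A}) := by
  refine ⟨rankOne_self_mem_densityOps x, fun Y hY => ?_⟩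
  rw [ContinuousLinearMap.mul_def, rankOne_comp, hY.1.1.isSelfAdjoint.adjoint_eq,
    apply_eq_zero_of_mem_densPerp_singleton hY hx, map_zero]

theorem apply_mem_of_mem_densPerp_densPerp {X : H →L[ℂ] H}
    (hX : X ∈ densPerp (densPerp {A})) (x : H) :
    X x ∈ (LinearMap.range (A : H →ₗ[ℂ] H))ᗮᗮ := by
  intro w hw
  have hXw : X w = 0 := by
    have := hX.2 _ (rankOne_self_mem_densPerp_singleton hw)
    rw [ContinuousLinearMap.mul_def, comp_rankOne, rankOne_eq_zero] at this
    exact this.elim id fun h => h ▸ map_zero X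
  rw [← hX.1.1.inner_left_eq_inner_right, hXw, inner_zero_left]

theorem natCast_le_rank_of_hasOrthogonalFamily {k : ℕ}
    (h : HasOrthogonalFamily (densPerp (densPerp {A})) k) :
    (k : Cardinal) ≤ Module.rank ℂ (LinearMap.range (A : H →ₗ[ℂ] H))ᗮᗮ := by
  obtain ⟨f, hmem, hne, horth⟩ := h
  choose x hx using fun i => DFunLike.ne_iff.mp (hne i)
  let v : Fin k → (LinearMap.range (A : H →ₗ[ℂ] H))ᗮᗮ := fun i =>
    ⟨f i (x i), apply_mem_of_mem_densPerp_densPerp (hmem i) (x i)⟩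
  refine natCast_le_rank_iff.mpr
    ⟨v, linearIndependent_of_ne_zero_of_inner_eq_zero (fun i => ?_) fun i j hij => ?_⟩
  · simpa [v] using hx i
  · change ⟪f i (x i), f j (x j)⟫_ℂ = 0
    have hfij : f i (f j (x j)) = 0 := congr($(horth i j hij) (x j))
    rw [(hmem i).1.1.inner_left_eq_inner_right, hfij, inner_zero_right]

theorem hasOrthogonalFamily_of_natCast_le_rank {k : ℕ}
    (h : (k : Cardinal) ≤ Module.rank ℂ (LinearMap.range (A : H →ₗ[ℂ] H))ᗮᗮ) :
    HasOrthogonalFamily (densPerp (densPerp {A})) k := by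
  obtain ⟨v, hv⟩ := natCast_le_rank_iff.mp h
  have hu := gramSchmidtNormed_orthonormal hv
  set u := gramSchmidtNormed ℂ v
  refine ⟨fun i => rankOne ℂ (u i : H) (u i), fun i => rankOne_self_mem_densPerp_densPerp (u i).2,
    fun i => ?_, fun i j hij => ?_⟩
  · have hui := hu.ne_zero i
    exact rankOne_ne_zero (by simpa using hui) (by simpa using hui)
  · rw [ContinuousLinearMap.mul_def, rankOne_comp_rankOne, ← Submodule.coe_inner, hu.2 hij,
      zero_smul]

theorem hasOrthogonalFamily_densPerp_densPerp_iff (k : ℕ) :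
    HasOrthogonalFamily (densPerp (densPerp {A})) k ↔
      (k : Cardinal) ≤ Module.rank ℂ (LinearMap.range (A : H →ₗ[ℂ] H))ᗮᗮ :=
  ⟨natCast_le_rank_of_hasOrthogonalFamily, hasOrthogonalFamily_of_natCast_le_rank⟩

end DensityOperators

theorem rank_eq_iff_maximal_orthogonal_family_general
    {H : Type*} [NormedAddCommGroup H] [InnerProductSpace ℂ H] [CompleteSpace H]
    (A : H →L[ℂ] H) (n : ℕ) (hn : 1 ≤ n) :
    Module.finrank ℂ (LinearMap.range (A : H →ₗ[ℂ] H)) = n ↔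
      (∃ f : Fin n → (H →L[ℂ] H),
        (∀ i, f i ∈ densPerp (densPerp {A})) ∧ (∀ i, f i ≠ 0) ∧
        (∀ i j, i ≠ j → f i * f j = 0)) ∧
      ¬(∃ g : Fin (n + 1) → (H →L[ℂ] H),
        (∀ i, g i ∈ densPerp (densPerp {A})) ∧ (∀ i, g i ≠ 0) ∧
        (∀ i j, i ≠ j → g i * g j = 0)) := by
  change _ ↔ HasOrthogonalFamily _ n ∧ ¬HasOrthogonalFamily _ (n + 1)
  rw [Submodule.finrank_eq_iff_rank_orthogonal_orthogonal_eq _ (by omega),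
    hasOrthogonalFamily_densPerp_densPerp_iff, hasOrthogonalFamily_densPerp_densPerp_iff, not_le,
    Nat.cast_succ, Cardinal.lt_natCast_add_one_iff, and_comm, ← le_antisymm_iff]

/-- For `A ∈ 𝒟(H)` and a positive integer `n`: `A` has rank `n` iff `{A}^⊥⊥` contains
`n` pairwise orthogonal nonzero elements but does not contain `n + 1` such elements. -/
theorem rank_eq_iff_maximal_orthogonal_family
    {H : Type*} [NormedAddCommGroup H] [InnerProductSpace ℂ H] [CompleteSpace H]
    (A : H →L[ℂ] H) (hA : A ∈ densityOps H) (n : ℕ) (hn : 1 ≤ n) :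
    Module.finrank ℂ (LinearMap.range (A : H →ₗ[ℂ] H)) = n ↔
      (∃ f : Fin n → (H →L[ℂ] H),
        (∀ i, f i ∈ densPerp (densPerp {A})) ∧ (∀ i, f i ≠ 0) ∧
        (∀ i j, i ≠ j → f i * f j = 0)) ∧
      ¬(∃ g : Fin (n + 1) → (H →L[ℂ] H),
        (∀ i, g i ∈ densPerp (densPerp {A})) ∧ (∀ i, g i ≠ 0) ∧
        (∀ i j, i ≠ j → g i * g j = 0)) :=
  rank_eq_iff_maximal_orthogonal_family_general A n hn
end

section
/- Let H be a complex Hilbert space and let X, Y ∈ S(H) be states. Then XY = 0 if and only if ‖X − Y‖₁ = 2. Consequently, every bijective map φ : S(H) → S(H) which preserves the trace-norm distance preserves orthogonality in both directions: XY = 0 if and only if φ(X)φ(Y) = 0. -/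
/-!
Common framework: operators on a complex Hilbert space `H`, the trace (computed in a
fixed orthonormal basis, which is basis-independent for positive operators), the set
`𝒟(H)` of density operators (positive trace-class operators), the set `S(H)` of states
(density operators of trace one), the trace norm `‖·‖₁`, the fidelity and the Bures
metric.
-/

set_option synthInstance.maxHeartbeats 1000000
set_option maxHeartbeats 1000000

open scoped InnerProductSpace

/-!
If `XY = 0` then `|X - Y| = X + Y`, so `‖X - Y‖₁ = tr X + tr Y = 2`. Conversely, write
`Δ = X - Y`; since `tr |Δ| = 2` and `tr Δ = 0`, the positive part has `tr Δ⁺ = 1`. Let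
`P = f(Δ)` for a continuous cutoff `f` with `0 ≤ f ≤ 1` vanishing on `(-∞, 0]`, so that
`tr (PΔP)` is close to `tr Δ⁺ = 1`. From `PXP = PYP + PΔP` and
`tr (PXP) = tr (√X P² √X) ≤ tr X = 1` (the identity `tr (A*A) = tr (AA*)` for `A = √X P`),
both `tr (PYP)` and `tr X - tr (PXP)` are small; these bound `‖√Y P‖²` and `‖√X (1 - P)‖²`.
Letting `f` run through cutoffs with steeper and steeper ramps gives `√X √Y = 0`, hence
`XY = 0`. Orthogonality of states is thus a property of their trace-norm distance alone,
so trace-norm isometries of `S(H)` preserve it in both directions.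
-/

open Filter Topology

lemma mul_eq_zero_of_tendsto {R : Type*} [Ring R] [TopologicalSpace R] [IsTopologicalRing R]
    [T2Space R] {ι : Type*} {l : Filter ι} [l.NeBot] {a b : R} {p : ι → R}
    (ha : Tendsto (fun i => a * (1 - p i)) l (𝓝 0)) (hb : Tendsto (fun i => p i * b) l (𝓝 0)) :
    a * b = 0 := by
  have h := (ha.mul_const b).add (hb.const_mul a)
  simp only [zero_mul, mul_zero, add_zero] at h
  refine tendsto_nhds_unique (tendsto_const_nhds.congr fun i => ?_) h
  noncomm_ring

lemma tendsto_zero_of_norm_sq_le {E : Type*} [SeminormedAddCommGroup E] {ι : Type*}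
    {l : Filter ι} {u : ι → E} {v : ι → ℝ} (huv : ∀ i, ‖u i‖ ^ 2 ≤ v i)
    (hv : Tendsto v l (𝓝 0)) : Tendsto u l (𝓝 0) := by
  refine squeeze_zero_norm (fun i => Real.le_sqrt_of_sq_le (huv i)) ?_
  simpa using hv.sqrt

-- `cfc (cutoff n) Δ` stands in for the support projection of `Δ⁺`, which the continuous
-- functional calculus cannot produce.
def cutoff (n : ℕ) (t : ℝ) : ℝ := min 1 ((n + 1) * t⁺)

@[fun_prop]
lemma continuous_cutoff (n : ℕ) : Continuous (cutoff n) :=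
  continuous_const.min (continuous_const.mul continuous_posPart)

lemma cutoff_nonneg (n : ℕ) (t : ℝ) : 0 ≤ cutoff n t :=
  le_min zero_le_one (mul_nonneg (by positivity) (posPart_nonneg t))

lemma cutoff_le_one (n : ℕ) (t : ℝ) : cutoff n t ≤ 1 := min_le_left _ _

lemma cutoff_mul_self_le (n : ℕ) (t : ℝ) : cutoff n t * cutoff n t ≤ cutoff n t :=
  mul_le_of_le_one_left (cutoff_nonneg n t) (cutoff_le_one n t)

lemma cutoff_of_nonpos {n : ℕ} {t : ℝ} (ht : t ≤ 0) : cutoff n t = 0 := by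
  simp [cutoff, posPart_eq_zero.mpr ht]

lemma sq_cutoff_mul_nonneg (n : ℕ) (t : ℝ) : 0 ≤ cutoff n t ^ 2 * t := by
  rcases le_total t 0 with ht | ht
  · simp [cutoff_of_nonpos ht]
  · positivity

lemma sq_cutoff_mul_le_posPart (n : ℕ) (t : ℝ) : cutoff n t ^ 2 * t ≤ t⁺ := by
  rcases le_total t 0 with ht | ht
  · simp [cutoff_of_nonpos ht]
  · rw [posPart_eq_self.mpr ht]
    exact mul_le_of_le_one_left ht (pow_le_one₀ (cutoff_nonneg n t) (cutoff_le_one n t))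

lemma posPart_sub_sq_cutoff_mul_le (n : ℕ) (t : ℝ) :
    t⁺ - cutoff n t ^ 2 * t ≤ 1 / (n + 1) := by
  have hn : (0 : ℝ) < n + 1 := by positivity
  rcases le_total t 0 with ht | ht
  · rw [cutoff_of_nonpos ht, posPart_eq_zero.mpr ht, zero_pow two_ne_zero, zero_mul, sub_zero]
    positivity
  rw [posPart_eq_self.mpr ht]
  rcases le_total 1 ((n + 1) * t) with h1 | h1
  · rw [cutoff, posPart_eq_self.mpr ht, min_eq_left h1, one_pow, one_mul, sub_self]
    positivity
  · have := sq_cutoff_mul_nonneg n t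
    rw [le_div_iff₀ hn]
    nlinarith

section CStarAlgebra

variable {A : Type*} [CStarAlgebra A] [PartialOrder A] [StarOrderedRing A]

lemma CFC.abs_sub_of_mul_eq_zero {a b : A} (ha : 0 ≤ a) (hb : 0 ≤ b) (hab : a * b = 0) :
    CFC.abs (a - b) = a + b := by
  have hba : b * a = 0 := by
    simpa only [star_mul, ha.isSelfAdjoint.star_eq, hb.isSelfAdjoint.star_eq, star_zero]
      using congrArg star hab
  have hsq : star (a - b) * (a - b) = (a + b) * (a + b) := by
    rw [(ha.isSelfAdjoint.sub hb.isSelfAdjoint).star_eq]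
    calc (a - b) * (a - b) = a * a + b * b - (a * b + b * a) := by noncomm_ring
      _ = a * a + b * b + (a * b + b * a) := by rw [hab, hba, add_zero, sub_zero, add_zero]
      _ = (a + b) * (a + b) := by noncomm_ring
  rw [CFC.abs, hsq, CFC.sqrt_mul_self _ (add_nonneg ha hb)]

lemma star_mul_self_sqrt_mul {a p : A} (ha : 0 ≤ a) (hp : IsSelfAdjoint p) :
    star (CFC.sqrt a * p) * (CFC.sqrt a * p) = p * a * p := by
  rw [star_mul, hp.star_eq, (CFC.sqrt_nonneg a).isSelfAdjoint.star_eq]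
  conv_rhs => rw [← CFC.sqrt_mul_sqrt_self a ha]
  simp only [mul_assoc]

lemma sqrt_mul_mul_star_self {a p : A} (hp : IsSelfAdjoint p) :
    CFC.sqrt a * p * star (CFC.sqrt a * p) = CFC.sqrt a * (p * p) * CFC.sqrt a := by
  rw [star_mul, hp.star_eq, (CFC.sqrt_nonneg a).isSelfAdjoint.star_eq]
  noncomm_ring

lemma sqrt_conj_le {a p : A} (ha : 0 ≤ a) (hp : p ≤ 1) : CFC.sqrt a * p * CFC.sqrt a ≤ a := by
  simpa only [mul_one, CFC.sqrt_mul_sqrt_self a ha] using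
    (CFC.sqrt_nonneg a).isSelfAdjoint.conjugate_le_conjugate hp

lemma cfc_cutoff_mul_self_le (n : ℕ) (a : A) :
    cfc (cutoff n) a * cfc (cutoff n) a ≤ cfc (cutoff n) a := by
  rw [← cfc_mul (cutoff n) (cutoff n) a]
  exact cfc_mono fun t _ => cutoff_mul_self_le n t

lemma cfc_cutoff_le_one (n : ℕ) (a : A) : cfc (cutoff n) a ≤ 1 :=
  cfc_le_one _ _ fun t _ => cutoff_le_one n t

omit [PartialOrder A] [StarOrderedRing A] in
lemma cfc_cutoff_mul_mul_cfc_cutoff (n : ℕ) {a : A} (ha : IsSelfAdjoint a) :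
    cfc (cutoff n) a * a * cfc (cutoff n) a = cfc (fun t => cutoff n t ^ 2 * t) a := by
  nth_rewrite 2 [← cfc_id' ℝ a]
  rw [← cfc_mul .., ← cfc_mul ..]
  exact cfc_congr fun t _ => by ring

omit [PartialOrder A] [StarOrderedRing A] in
lemma posPart_eq_cfc (a : A) : a⁺ = cfc (·⁺ : ℝ → ℝ) a :=
  cfcₙ_eq_cfc (by fun_prop) (by simp)

end CStarAlgebra

section HilbertSpace

variable {H : Type*} [NormedAddCommGroup H] [InnerProductSpace ℂ H] [CompleteSpace H]

omit [CompleteSpace H] in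
lemma re_inner_nonneg_of_nonneg {T : H →L[ℂ] H} (hT : 0 ≤ T) (x : H) : 0 ≤ (⟪x, T x⟫_ℂ).re :=
  ((ContinuousLinearMap.nonneg_iff_isPositive T).mp hT).re_inner_nonneg_right x

lemma re_inner_le_re_inner_of_le {S T : H →L[ℂ] H} (hST : S ≤ T) (x : H) :
    (⟪x, S x⟫_ℂ).re ≤ (⟪x, T x⟫_ℂ).re := by
  have := re_inner_nonneg_of_nonneg (sub_nonneg.mpr hST) x
  simp only [sub_apply, inner_sub_right, Complex.sub_re] at this
  linarith

lemma re_inner_star_mul_self_apply (A : H →L[ℂ] H) (x : H) :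
    (⟪x, (star A * A) x⟫_ℂ).re = ‖A x‖ ^ 2 := by
  rw [mul_apply_eq_comp, ContinuousLinearMap.star_eq_adjoint,
    ContinuousLinearMap.adjoint_inner_right, inner_self_eq_norm_sq_to_K]
  norm_cast

noncomputable def fixedHilbertBasis : HilbertBasis (hilbertBasisVectors H) ℂ H :=
  (exists_hilbertBasis ℂ H).choose_spec.choose

@[simp]
lemma coe_fixedHilbertBasis : ⇑(fixedHilbertBasis (H := H)) = Subtype.val :=
  (exists_hilbertBasis ℂ H).choose_spec.choose_spec

lemma hasSum_norm_inner_sq (x : H) :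
    HasSum (fun e : hilbertBasisVectors H => ‖⟪(e : H), x⟫_ℂ‖ ^ 2) (‖x‖ ^ 2) := by
  have h := (fixedHilbertBasis.hasSum_inner_mul_inner x x).mapL Complex.reCLM
  simp only [coe_fixedHilbertBasis, Complex.reCLM_apply] at h
  convert h using 1
  · funext e
    rw [← inner_conj_symm (e : H) x, Complex.mul_conj, Complex.normSq_eq_norm_sq,
      Complex.ofReal_re, RCLike.norm_conj]
  · rw [inner_self_eq_norm_sq_to_K]
    norm_cast

lemma re_inner_apply_le_opNorm (T : H →L[ℂ] H) (e : hilbertBasisVectors H) :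
    (⟪(e : H), T e⟫_ℂ).re ≤ ‖T‖ := by
  have he : ‖(e : H)‖ = 1 := by simpa using fixedHilbertBasis.orthonormal.1 e
  calc (⟪(e : H), T e⟫_ℂ).re ≤ ‖(e : H)‖ * ‖T e‖ :=
        (Complex.re_le_norm _).trans (norm_inner_le_norm _ _)
    _ ≤ ‖(e : H)‖ * (‖T‖ * ‖(e : H)‖) := by gcongr; exact T.le_opNorm _
    _ = ‖T‖ := by rw [he, one_mul, mul_one]

lemma TraceSummable.of_le {S T : H →L[ℂ] H} (hS : 0 ≤ S) (hST : S ≤ T)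
    (hT : TraceSummable T) : TraceSummable S :=
  .of_nonneg_of_le (fun _ => re_inner_nonneg_of_nonneg hS _)
    (fun _ => re_inner_le_re_inner_of_le hST _) hT

lemma opTrace_add {S T : H →L[ℂ] H} (hS : TraceSummable S) (hT : TraceSummable T) :
    opTrace (S + T) = opTrace S + opTrace T := by
  simpa only [opTrace, add_apply, inner_add_right, Complex.add_re] using hS.tsum_add hT

lemma opTrace_sub {S T : H →L[ℂ] H} (hS : TraceSummable S) (hT : TraceSummable T) :
    opTrace (S - T) = opTrace S - opTrace T := by
  simpa only [opTrace, sub_apply, inner_sub_right, Complex.sub_re] using hS.tsum_sub hT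

lemma opTrace_nonneg {T : H →L[ℂ] H} (hT : 0 ≤ T) : 0 ≤ opTrace T :=
  tsum_nonneg fun _ => re_inner_nonneg_of_nonneg hT _

lemma opTrace_mono {S T : H →L[ℂ] H} (hST : S ≤ T) (hS : TraceSummable S)
    (hT : TraceSummable T) : opTrace S ≤ opTrace T :=
  hS.tsum_le_tsum (fun _ => re_inner_le_re_inner_of_le hST _) hT

lemma traceSummable_star_mul_self_iff (A : H →L[ℂ] H) :
    TraceSummable (star A * A) ↔ Summable fun e : hilbertBasisVectors H => ‖A e‖ ^ 2 := by
  simp only [TraceSummable, re_inner_star_mul_self_apply]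

lemma opTrace_star_mul_self (A : H →L[ℂ] H) :
    opTrace (star A * A) = ∑' e : hilbertBasisVectors H, ‖A e‖ ^ 2 := by
  simp only [opTrace, re_inner_star_mul_self_apply]

-- Both sides are the nonnegative double series `∑ₑ ∑_f |⟪f, A e⟫|²`, summed in the two orders.
lemma hasSum_norm_sq_star_apply {A : H →L[ℂ] H}
    (hA : Summable fun e : hilbertBasisVectors H => ‖A e‖ ^ 2) :
    HasSum (fun e : hilbertBasisVectors H => ‖star A e‖ ^ 2)
      (∑' e : hilbertBasisVectors H, ‖A e‖ ^ 2) := by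
  set F : hilbertBasisVectors H × hilbertBasisVectors H → ℝ :=
    fun p => ‖⟪(p.2 : H), A p.1⟫_ℂ‖ ^ 2
  have hrows (e : hilbertBasisVectors H) : HasSum (fun f => F (e, f)) (‖A e‖ ^ 2) :=
    hasSum_norm_inner_sq (A e)
  have hF : Summable F := (summable_prod_of_nonneg fun _ => by positivity).mpr
    ⟨fun e => (hrows e).summable, by simpa only [(hrows _).tsum_eq] using hA⟩
  have htotal : HasSum F (∑' e : hilbertBasisVectors H, ‖A e‖ ^ 2) := by
    simpa only [hF.tsum_prod' fun e => (hrows e).summable, (hrows _).tsum_eq] using hF.hasSum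
  refine ((Equiv.prodComm _ _).hasSum_iff.mpr htotal).prod_fiberwise fun f => ?_
  convert hasSum_norm_inner_sq (star A f) using 2 with e
  simp only [F, Function.comp_apply, Equiv.prodComm_apply, Prod.fst_swap, Prod.snd_swap,
    ContinuousLinearMap.star_eq_adjoint, ContinuousLinearMap.adjoint_inner_right]
  rw [norm_inner_symm]

lemma traceSummable_mul_star_self_iff (A : H →L[ℂ] H) :
    TraceSummable (A * star A) ↔ TraceSummable (star A * A) := by
  have key (B : H →L[ℂ] H) (hB : TraceSummable (star B * B)) : TraceSummable (B * star B) := by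
    rw [traceSummable_star_mul_self_iff] at hB
    simpa only [traceSummable_star_mul_self_iff, star_star] using
      (traceSummable_star_mul_self_iff (star B)).mpr (hasSum_norm_sq_star_apply hB).summable
  refine ⟨fun h => ?_, key A⟩
  simpa only [star_star] using key (star A) (by simpa only [star_star] using h)

lemma opTrace_mul_star_self {A : H →L[ℂ] H} (hA : TraceSummable (star A * A)) :
    opTrace (A * star A) = opTrace (star A * A) := by
  rw [traceSummable_star_mul_self_iff] at hA
  have h := opTrace_star_mul_self (star A)
  rw [star_star] at h
  rw [h, opTrace_star_mul_self, (hasSum_norm_sq_star_apply hA).tsum_eq]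

lemma sq_norm_le_opTrace_star_mul_self {A : H →L[ℂ] H} (hA : TraceSummable (star A * A)) :
    ‖A‖ ^ 2 ≤ opTrace (star A * A) := by
  set S := opTrace (star A * A)
  have hS : HasSum (fun f : hilbertBasisVectors H => ‖star A f‖ ^ 2) S := by
    rw [traceSummable_star_mul_self_iff] at hA
    simpa only [S, opTrace_star_mul_self] using hasSum_norm_sq_star_apply hA
  have hS0 : 0 ≤ S := hS.nonneg fun _ => by positivity
  have hpointwise (x : H) : ‖A x‖ ^ 2 ≤ (Real.sqrt S * ‖x‖) ^ 2 := by
    rw [mul_pow, Real.sq_sqrt hS0]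
    refine hasSum_le (fun f => ?_) (hasSum_norm_inner_sq (A x)) (hS.mul_right (‖x‖ ^ 2))
    rw [← ContinuousLinearMap.adjoint_inner_left, ← ContinuousLinearMap.star_eq_adjoint, ← mul_pow]
    exact pow_le_pow_left₀ (norm_nonneg _) (norm_inner_le_norm _ _) 2
  have hnorm : ‖A‖ ≤ Real.sqrt S := A.opNorm_le_bound (Real.sqrt_nonneg S) fun x =>
    (pow_le_pow_iff_left₀ (norm_nonneg _) (by positivity) two_ne_zero).mp (hpointwise x)
  calc ‖A‖ ^ 2 ≤ Real.sqrt S ^ 2 := pow_le_pow_left₀ (norm_nonneg _) hnorm 2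
    _ = S := Real.sq_sqrt hS0

lemma tendsto_opTrace_zero_of_tendsto_norm {ι : Type*} {l : Filter ι} {K : ι → H →L[ℂ] H}
    {T : H →L[ℂ] H} (hT : TraceSummable T) (hK0 : ∀ i, 0 ≤ K i) (hKT : ∀ i, K i ≤ T)
    (hK : Tendsto (fun i => ‖K i‖) l (𝓝 0)) : Tendsto (fun i => opTrace (K i)) l (𝓝 0) := by
  have hdiag (e : hilbertBasisVectors H) :
      Tendsto (fun i => (⟪(e : H), K i e⟫_ℂ).re) l (𝓝 0) :=
    squeeze_zero (fun i => re_inner_nonneg_of_nonneg (hK0 i) _)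
      (fun i => re_inner_apply_le_opNorm _ e) hK
  have hdominated : ∀ᶠ i in l, ∀ e : hilbertBasisVectors H,
      ‖(⟪(e : H), K i e⟫_ℂ).re‖ ≤ (⟪(e : H), T e⟫_ℂ).re := .of_forall fun i e => by
    rw [Real.norm_of_nonneg (re_inner_nonneg_of_nonneg (hK0 i) _)]
    exact re_inner_le_re_inner_of_le (hKT i) _
  simpa only [opTrace, tsum_zero] using tendsto_tsum_of_dominated_convergence hT hdiag hdominated

lemma tendsto_opTrace_cutoff_conj {Δ : H →L[ℂ] H} (hΔ : IsSelfAdjoint Δ)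
    (hΔ' : TraceSummable Δ⁺) :
    Tendsto (fun n : ℕ => opTrace (cfc (cutoff n) Δ * Δ * cfc (cutoff n) Δ)) atTop
      (𝓝 (opTrace Δ⁺)) := by
  set K : ℕ → H →L[ℂ] H := fun n => cfc (fun t => t⁺ - cutoff n t ^ 2 * t) Δ
  have hK (n : ℕ) : cfc (cutoff n) Δ * Δ * cfc (cutoff n) Δ = Δ⁺ - K n := by
    rw [cfc_cutoff_mul_mul_cfc_cutoff n hΔ, posPart_eq_cfc, ← cfc_sub ..]
    exact cfc_congr fun t _ => by ring
  have hK0 (n : ℕ) : 0 ≤ K n := cfc_nonneg fun t _ => sub_nonneg.mpr (sq_cutoff_mul_le_posPart n t)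
  have hKle (n : ℕ) : K n ≤ Δ⁺ := by
    rw [posPart_eq_cfc]
    exact cfc_mono fun t _ => sub_le_self _ (sq_cutoff_mul_nonneg n t)
  have hKnorm (n : ℕ) : ‖K n‖ ≤ 1 / (n + 1) := norm_cfc_le (by positivity) fun t _ => by
    rw [Real.norm_of_nonneg (sub_nonneg.mpr (sq_cutoff_mul_le_posPart n t))]
    exact posPart_sub_sq_cutoff_mul_le n t
  have hlim := tendsto_opTrace_zero_of_tendsto_norm hΔ' hK0 hKle <|
    squeeze_zero (fun n => norm_nonneg _) hKnorm tendsto_one_div_add_atTop_nhds_zero_nat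
  simpa only [hK, opTrace_sub hΔ' (hΔ'.of_le (hK0 _) (hKle _)), sub_zero] using
    tendsto_const_nhds.sub hlim

lemma nonneg_of_mem_densityOps {X : H →L[ℂ] H} (hX : X ∈ densityOps H) : 0 ≤ X :=
  (ContinuousLinearMap.nonneg_iff_isPositive X).mpr hX.1

lemma traceNorm_eq_opTrace_abs (T : H →L[ℂ] H) : traceNorm T = opTrace (CFC.abs T) := rfl

lemma traceSummable_abs_of_traceNorm_ne_zero {T : H →L[ℂ] H} (hT : traceNorm T ≠ 0) :
    TraceSummable (CFC.abs T) := by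
  by_contra h
  exact hT (tsum_eq_zero_of_not_summable h)

lemma TraceSummable.posPart {T : H →L[ℂ] H} (hT : IsSelfAdjoint T)
    (h : TraceSummable (CFC.abs T)) : TraceSummable T⁺ := by
  rw [← CFC.posPart_add_negPart T hT] at h
  exact h.of_le (CFC.posPart_nonneg T) (le_add_of_nonneg_right (CFC.negPart_nonneg T))

lemma TraceSummable.negPart {T : H →L[ℂ] H} (hT : IsSelfAdjoint T)
    (h : TraceSummable (CFC.abs T)) : TraceSummable T⁻ := by
  rw [← CFC.posPart_add_negPart T hT] at h
  exact h.of_le (CFC.negPart_nonneg T) (le_add_of_nonneg_left (CFC.posPart_nonneg T))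

lemma two_mul_opTrace_posPart_sub {X Y : H →L[ℂ] H} (hX : X ∈ densityOps H)
    (hY : Y ∈ densityOps H) (h : TraceSummable (CFC.abs (X - Y))) :
    2 * opTrace (X - Y)⁺ = traceNorm (X - Y) + opTrace X - opTrace Y := by
  have hΔ : IsSelfAdjoint (X - Y) :=
    (nonneg_of_mem_densityOps hX).isSelfAdjoint.sub (nonneg_of_mem_densityOps hY).isSelfAdjoint
  have hpos := h.posPart hΔ
  have hneg := h.negPart hΔ
  have hsplit : (X - Y)⁺ + Y = X + (X - Y)⁻ := by
    rw [← sub_eq_sub_iff_add_eq_add, CFC.posPart_sub_negPart (X - Y) hΔ]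
  have htr := congrArg opTrace hsplit
  rw [opTrace_add hpos hY.2, opTrace_add hX.2 hneg] at htr
  rw [traceNorm_eq_opTrace_abs, ← CFC.posPart_add_negPart (X - Y) hΔ, opTrace_add hpos hneg]
  linarith

lemma traceSummable_conj {X P : H →L[ℂ] H} (hX : X ∈ densityOps H) (hP : IsSelfAdjoint P)
    (hP1 : P * P ≤ 1) : TraceSummable (P * X * P) := by
  have hX0 := nonneg_of_mem_densityOps hX
  rw [← star_mul_self_sqrt_mul hX0 hP, ← traceSummable_mul_star_self_iff,
    sqrt_mul_mul_star_self hP]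
  exact hX.2.of_le ((CFC.sqrt_nonneg X).isSelfAdjoint.conjugate_nonneg hP.mul_self_nonneg)
    (sqrt_conj_le hX0 hP1)

lemma opTrace_conj {X P : H →L[ℂ] H} (hX : X ∈ densityOps H) (hP : IsSelfAdjoint P)
    (hP1 : P * P ≤ 1) :
    opTrace (P * X * P) = opTrace (CFC.sqrt X * (P * P) * CFC.sqrt X) := by
  have hX0 := nonneg_of_mem_densityOps hX
  have h := traceSummable_conj hX hP hP1
  rw [← star_mul_self_sqrt_mul hX0 hP] at h ⊢
  rw [← sqrt_mul_mul_star_self hP, opTrace_mul_star_self h]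

lemma opTrace_conj_le {X P : H →L[ℂ] H} (hX : X ∈ densityOps H) (hP : IsSelfAdjoint P)
    (hP1 : P * P ≤ 1) : opTrace (P * X * P) ≤ opTrace X := by
  have hX0 := nonneg_of_mem_densityOps hX
  rw [opTrace_conj hX hP hP1]
  exact opTrace_mono (sqrt_conj_le hX0 hP1) (hX.2.of_le
    ((CFC.sqrt_nonneg X).isSelfAdjoint.conjugate_nonneg hP.mul_self_nonneg)
    (sqrt_conj_le hX0 hP1)) hX.2

lemma sq_norm_mul_sqrt_le_opTrace_conj {Y P : H →L[ℂ] H} (hY : Y ∈ densityOps H)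
    (hP : IsSelfAdjoint P) (hP1 : P * P ≤ 1) :
    ‖P * CFC.sqrt Y‖ ^ 2 ≤ opTrace (P * Y * P) := by
  have hY0 := nonneg_of_mem_densityOps hY
  have h := traceSummable_conj hY hP hP1
  rw [← star_mul_self_sqrt_mul hY0 hP] at h ⊢
  calc ‖P * CFC.sqrt Y‖ ^ 2 = ‖CFC.sqrt Y * P‖ ^ 2 := by
        rw [← norm_star (CFC.sqrt Y * P), star_mul, hP.star_eq,
          (CFC.sqrt_nonneg Y).isSelfAdjoint.star_eq]
    _ ≤ _ := sq_norm_le_opTrace_star_mul_self h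

lemma sq_norm_sqrt_mul_one_sub_le {X P : H →L[ℂ] H} (hX : X ∈ densityOps H)
    (hP : IsSelfAdjoint P) (hPP : P * P ≤ P) (hP1 : P ≤ 1) :
    ‖CFC.sqrt X * (1 - P)‖ ^ 2 ≤ opTrace X - opTrace (P * X * P) := by
  have hX0 := nonneg_of_mem_densityOps hX
  have hP2 : P * P ≤ 1 := hPP.trans hP1
  have hsX : IsSelfAdjoint (CFC.sqrt X) := (CFC.sqrt_nonneg X).isSelfAdjoint
  have hQsa : IsSelfAdjoint (1 - P) := (IsSelfAdjoint.one _).sub hP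
  set C := CFC.sqrt X * (P * P) * CFC.sqrt X
  set Q := (1 - P) * CFC.sqrt X
  have hQ : star Q * Q ≤ X - C := by
    have hsq : (1 - P) * (1 - P) ≤ 1 - P * P := by
      have h : 1 - P * P = (1 - P) * (1 - P) + ((P - P * P) + (P - P * P)) := by noncomm_ring
      rw [h]
      exact le_add_of_nonneg_right (add_nonneg (sub_nonneg.mpr hPP) (sub_nonneg.mpr hPP))
    have h : X - C = CFC.sqrt X * (1 - P * P) * CFC.sqrt X := by
      rw [mul_sub, sub_mul, mul_one, CFC.sqrt_mul_sqrt_self X hX0]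
    rw [h, star_mul, hQsa.star_eq, hsX.star_eq, ← mul_assoc]
    exact hsX.conjugate_le_conjugate hsq
  have hC0 : 0 ≤ C := hsX.conjugate_nonneg hP.mul_self_nonneg
  have hCs : TraceSummable C := hX.2.of_le hC0 (sqrt_conj_le hX0 hP2)
  have hRs : TraceSummable (X - C) :=
    hX.2.of_le (sub_nonneg.mpr (sqrt_conj_le hX0 hP2)) (sub_le_self _ hC0)
  have hQs : TraceSummable (star Q * Q) := hRs.of_le (star_mul_self_nonneg Q) hQ
  calc ‖CFC.sqrt X * (1 - P)‖ ^ 2 = ‖Q‖ ^ 2 := by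
        rw [← norm_star Q, star_mul, hQsa.star_eq, hsX.star_eq]
    _ ≤ opTrace (star Q * Q) := sq_norm_le_opTrace_star_mul_self hQs
    _ ≤ opTrace (X - C) := opTrace_mono hQ hQs hRs
    _ = opTrace X - opTrace (P * X * P) := by rw [opTrace_conj hX hP hP2, opTrace_sub hX.2 hCs]

lemma sq_norms_le_opTrace_sub_opTrace_conj {X Y P : H →L[ℂ] H} (hX : X ∈ densityOps H)
    (hY : Y ∈ densityOps H) (hP : IsSelfAdjoint P) (hPP : P * P ≤ P) (hP1 : P ≤ 1) :
    ‖CFC.sqrt X * (1 - P)‖ ^ 2 ≤ opTrace X - opTrace (P * (X - Y) * P) ∧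
      ‖P * CFC.sqrt Y‖ ^ 2 ≤ opTrace X - opTrace (P * (X - Y) * P) := by
  have hP2 : P * P ≤ 1 := hPP.trans hP1
  have hdiff : opTrace (P * (X - Y) * P) = opTrace (P * X * P) - opTrace (P * Y * P) := by
    rw [← opTrace_sub (traceSummable_conj hX hP hP2) (traceSummable_conj hY hP hP2)]
    congr 1
    noncomm_ring
  have hPYP : 0 ≤ opTrace (P * Y * P) :=
    opTrace_nonneg (hP.conjugate_nonneg (nonneg_of_mem_densityOps hY))
  have hPXP := opTrace_conj_le hX hP hP2
  constructor
  · linarith [sq_norm_sqrt_mul_one_sub_le hX hP hPP hP1]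
  · linarith [sq_norm_mul_sqrt_le_opTrace_conj hY hP hP2]

theorem traceNorm_sub_eq_two_of_mul_eq_zero {X Y : H →L[ℂ] H} (hX : X ∈ states H)
    (hY : Y ∈ states H) (hXY : X * Y = 0) : traceNorm (X - Y) = 2 := by
  rw [traceNorm_eq_opTrace_abs, CFC.abs_sub_of_mul_eq_zero (nonneg_of_mem_densityOps hX.1)
    (nonneg_of_mem_densityOps hY.1) hXY, opTrace_add hX.1.2 hY.1.2, hX.2, hY.2]
  norm_num

theorem mul_eq_zero_of_traceNorm_sub_eq_two {X Y : H →L[ℂ] H} (hX : X ∈ states H)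
    (hY : Y ∈ states H) (h : traceNorm (X - Y) = 2) : X * Y = 0 := by
  have hX0 := nonneg_of_mem_densityOps hX.1
  have hY0 := nonneg_of_mem_densityOps hY.1
  have hΔ : IsSelfAdjoint (X - Y) := hX0.isSelfAdjoint.sub hY0.isSelfAdjoint
  have habs := traceSummable_abs_of_traceNorm_ne_zero (T := X - Y) (by rw [h]; norm_num)
  have hpos := habs.posPart hΔ
  have hpos_tr : opTrace (X - Y)⁺ = 1 := by
    linarith [two_mul_opTrace_posPart_sub hX.1 hY.1 habs, hX.2, hY.2]
  have hdefect : Tendsto (fun n : ℕ => opTrace X -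
      opTrace (cfc (cutoff n) (X - Y) * (X - Y) * cfc (cutoff n) (X - Y))) atTop (𝓝 0) := by
    convert tendsto_const_nhds.sub (tendsto_opTrace_cutoff_conj hΔ hpos) using 2
    rw [hX.2, hpos_tr, sub_self]
  have hbound (n : ℕ) := sq_norms_le_opTrace_sub_opTrace_conj hX.1 hY.1 (cfc_predicate _ _)
    (cfc_cutoff_mul_self_le n (X - Y)) (cfc_cutoff_le_one n (X - Y))
  have hsqrt : CFC.sqrt X * CFC.sqrt Y = 0 :=
    mul_eq_zero_of_tendsto (tendsto_zero_of_norm_sq_le (fun n => (hbound n).1) hdefect)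
      (tendsto_zero_of_norm_sq_le (fun n => (hbound n).2) hdefect)
  rw [← CFC.sqrt_mul_sqrt_self X hX0, ← CFC.sqrt_mul_sqrt_self Y hY0]
  calc _ = CFC.sqrt X * (CFC.sqrt X * CFC.sqrt Y) * CFC.sqrt Y := by simp only [mul_assoc]
    _ = 0 := by rw [hsqrt, mul_zero, zero_mul]

end HilbertSpace

/-- Two states `X, Y ∈ S(H)` are orthogonal iff `‖X − Y‖₁ = 2`; consequently every
bijective trace-norm isometry of `S(H)` preserves orthogonality in both directions. -/
theorem states_orthogonal_iff_traceNorm_eq_two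
    {H : Type*} [NormedAddCommGroup H] [InnerProductSpace ℂ H] [CompleteSpace H] :
    (∀ X ∈ states H, ∀ Y ∈ states H, (X * Y = 0 ↔ traceNorm (X - Y) = 2)) ∧
    (∀ φ : (H →L[ℂ] H) → (H →L[ℂ] H), Set.BijOn φ (states H) (states H) →
      (∀ A ∈ states H, ∀ B ∈ states H, traceNorm (φ A - φ B) = traceNorm (A - B)) →
      ∀ X ∈ states H, ∀ Y ∈ states H, (X * Y = 0 ↔ φ X * φ Y = 0)) := by
  have orthogonal_iff (X : H →L[ℂ] H) (hX : X ∈ states H) (Y : H →L[ℂ] H) (hY : Y ∈ states H) :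
      X * Y = 0 ↔ traceNorm (X - Y) = 2 :=
    ⟨traceNorm_sub_eq_two_of_mul_eq_zero hX hY, mul_eq_zero_of_traceNorm_sub_eq_two hX hY⟩
  refine ⟨orthogonal_iff, fun φ hφ hiso X hX Y hY => ?_⟩
  rw [orthogonal_iff X hX Y hY, ← hiso X hX Y hY,
    orthogonal_iff _ (hφ.mapsTo hX) _ (hφ.mapsTo hY)]
end
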